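/- Let A be a positive definite Hermitian d×d complex matrix and B a positive semidefinite Hermitian d×d matrix with tr B = 1 that commutes with A. Let P be the orthogonal projection onto the range (support) of B. Then tr( B³ · A⁻² ) ≥ ( tr(P·A) )⁻². In particular tr(B³A⁻²) ≥ (tr A)⁻². -/

import Mathlib

open Matrix MeasureTheory
open scoped ComplexOrder

noncomputable section

/-- Logarithm of a matrix: for a Hermitian matrix, apply the real logarithm to the
eigenvalues via the spectral decomposition (functional calculus); junk value `0`
for non-Hermitian matrices. -/
def matLog {d : ℕ} (A : Matrix (Fin d) (Fin d) ℂ) : Matrix (Fin d) (Fin d) ℂ :=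
  if hA : A.IsHermitian then
    (hA.eigenvectorUnitary : Matrix (Fin d) (Fin d) ℂ) *
      Matrix.diagonal (fun i => (Real.log (hA.eigenvalues i) : ℂ)) *
      (star hA.eigenvectorUnitary : Matrix (Fin d) (Fin d) ℂ)
  else 0

/-- The absolute value `|A| = √(AᴴA)` of a matrix. -/
def matAbs {d : ℕ} (A : Matrix (Fin d) (Fin d) ℂ) : Matrix (Fin d) (Fin d) ℂ :=
  (((Matrix.posSemidef_conjTranspose_mul_self A).1.eigenvectorUnitary : Matrix (Fin d) (Fin d) ℂ) *
    Matrix.diagonal (fun i => ((Real.sqrt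
      ((Matrix.posSemidef_conjTranspose_mul_self A).1.eigenvalues i) : ℝ) : ℂ)) *
    (star (Matrix.posSemidef_conjTranspose_mul_self A).1.eigenvectorUnitary : Matrix (Fin d) (Fin d) ℂ))

/-- The trace norm `‖A‖₁ = tr √(AᴴA)`. -/
def traceNorm {d : ℕ} (A : Matrix (Fin d) (Fin d) ℂ) : ℝ :=
  ((matAbs A).trace).re

/-- The positive part `A₊ = (A + |A|)/2` of a (Hermitian) matrix. -/
def matPos {d : ℕ} (A : Matrix (Fin d) (Fin d) ℂ) : Matrix (Fin d) (Fin d) ℂ :=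
  (2⁻¹ : ℂ) • (A + matAbs A)

/-- The negative part `A₋ = (|A| − A)/2` of a (Hermitian) matrix. -/
def matNeg {d : ℕ} (A : Matrix (Fin d) (Fin d) ℂ) : Matrix (Fin d) (Fin d) ℂ :=
  (2⁻¹ : ℂ) • (matAbs A - A)

/-- The quantum relative entropy `S(ρ‖σ) = tr ρ (log ρ − log σ)`. -/
def relEnt {d : ℕ} (ρ σ : Matrix (Fin d) (Fin d) ℂ) : ℝ :=
  ((ρ * (matLog ρ - matLog σ)).trace).re

/-- Smallest eigenvalue of a Hermitian matrix. -/
def lamMin {d : ℕ} {A : Matrix (Fin d) (Fin d) ℂ} (hA : A.IsHermitian) : ℝ :=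
  ⨅ i, hA.eigenvalues i

/-- The asymmetry function of the binary Kullback–Leibler divergence:
`a(p,t) = (2p+t)·log(1+t/p) + (2(1−p)−t)·log(1−t/(1−p))`. -/
def asym (p t : ℝ) : ℝ :=
  (2 * p + t) * Real.log (1 + t / p) + (2 * (1 - p) - t) * Real.log (1 - t / (1 - p))

/-!
Write `B = ∑ bᵢ uᵢ uᵢᴴ` in an orthonormal eigenbasis. Then `tr(B³A⁻²) = ∑ bᵢ³ ⟨uᵢ, A⁻²uᵢ⟩`,
`tr(PA) = ∑_{bᵢ ≠ 0} ⟨uᵢ, Auᵢ⟩` and `∑ bᵢ = tr B = 1`. For a unit vector `u`, Cauchy–Schwarz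
gives `⟨u, A⁻²u⟩ ≥ ⟨u, A⁻¹u⟩² ≥ ⟨u, Au⟩⁻²`, and Radon's inequality
`∑ bᵢ³/aᵢ² ≥ (∑ bᵢ)³/(∑ aᵢ)²` over the support of `B` concludes.
-/

namespace Finset

theorem cube_sum_div_sq_sum_le_sum_cube_div_sq {ι R : Type*} [Semifield R] [LinearOrder R]
    [IsStrictOrderedRing R] [ExistsAddOfLE R] (s : Finset ι) {x y : ι → R}
    (hx : ∀ i ∈ s, 0 < x i) (hy : ∀ i ∈ s, 0 < y i) :
    (∑ i ∈ s, x i) ^ 3 / (∑ i ∈ s, y i) ^ 2 ≤ ∑ i ∈ s, x i ^ 3 / y i ^ 2 := by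
  rcases s.eq_empty_or_nonempty with rfl | hs
  · simp
  have hX : 0 < ∑ i ∈ s, x i := sum_pos hx hs
  have hY : 0 < ∑ i ∈ s, y i := sum_pos hy hs
  calc (∑ i ∈ s, x i) ^ 3 / (∑ i ∈ s, y i) ^ 2
      = ((∑ i ∈ s, x i) ^ 2 / ∑ i ∈ s, y i) ^ 2 / ∑ i ∈ s, x i := by
        field_simp
    _ ≤ (∑ i ∈ s, x i ^ 2 / y i) ^ 2 / ∑ i ∈ s, x i := by
        gcongr
        exact sq_sum_div_le_sum_sq_div s x hy
    _ ≤ ∑ i ∈ s, (x i ^ 2 / y i) ^ 2 / x i := sq_sum_div_le_sum_sq_div s _ hx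
    _ = ∑ i ∈ s, x i ^ 3 / y i ^ 2 := sum_congr rfl fun i hi => by
        have := (hx i hi).ne'
        have := (hy i hi).ne'
        field_simp

theorem inv_sq_sum_le_sum_cube_mul {ι : Type*} (s : Finset ι) {a b c : ι → ℝ}
    (hb : ∀ i ∈ s, 0 ≤ b i) (hbs : ∑ i ∈ s, b i = 1) (ha : ∀ i ∈ s, 0 < a i)
    (hac : ∀ i ∈ s, 1 ≤ a i ^ 2 * c i) :
    ((∑ i ∈ s, b i * (b i)⁻¹ * a i) ^ 2)⁻¹ ≤ ∑ i ∈ s, b i ^ 3 * c i ∧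
      ((∑ i ∈ s, a i) ^ 2)⁻¹ ≤ ∑ i ∈ s, b i ^ 3 * c i := by
  classical
  set t := s.filter (fun i => b i ≠ 0)
  have hts : t ⊆ s := filter_subset _ _
  have hbt : ∑ i ∈ t, b i = 1 := by rw [sum_filter_ne_zero, hbs]
  have hat : 0 < ∑ i ∈ t, a i :=
    sum_pos (fun i hi => ha i (hts hi)) (nonempty_of_sum_ne_zero (hbt ▸ one_ne_zero))
  have hsupp : ∑ i ∈ s, b i * (b i)⁻¹ * a i = ∑ i ∈ t, a i := by
    rw [sum_filter]
    refine sum_congr rfl fun i _ => ?_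
    split_ifs with h
    · rw [mul_inv_cancel₀ h, one_mul]
    · rw [not_not.1 h, zero_mul, zero_mul]
  have hc : ∀ i ∈ s, 0 ≤ c i := fun i hi =>
    (pos_of_mul_pos_right (one_pos.trans_le (hac i hi)) (sq_nonneg _)).le
  have hmain : ((∑ i ∈ t, a i) ^ 2)⁻¹ ≤ ∑ i ∈ s, b i ^ 3 * c i :=
    calc ((∑ i ∈ t, a i) ^ 2)⁻¹ = (∑ i ∈ t, b i) ^ 3 / (∑ i ∈ t, a i) ^ 2 := by
          rw [hbt, one_pow, one_div]
      _ ≤ ∑ i ∈ t, b i ^ 3 / a i ^ 2 := cube_sum_div_sq_sum_le_sum_cube_div_sq t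
          (fun i hi => (hb i (hts hi)).lt_of_ne' (mem_filter.1 hi).2) (fun i hi => ha i (hts hi))
      _ ≤ ∑ i ∈ t, b i ^ 3 * c i := sum_le_sum fun i hi => by
          rw [div_eq_mul_inv]
          exact mul_le_mul_of_nonneg_left
            ((inv_le_iff_one_le_mul₀' (pow_pos (ha i (hts hi)) 2)).2 (hac i (hts hi)))
            (pow_nonneg (hb i (hts hi)) 3)
      _ ≤ ∑ i ∈ s, b i ^ 3 * c i := sum_le_sum_of_subset_of_nonneg hts fun i hi _ =>
          mul_nonneg (pow_nonneg (hb i hi) 3) (hc i hi)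
  have hts_le : ∑ i ∈ t, a i ≤ ∑ i ∈ s, a i :=
    sum_le_sum_of_subset_of_nonneg hts fun i hi _ => (ha i hi).le
  exact ⟨hsupp ▸ hmain, (inv_anti₀ (pow_pos hat 2) (pow_le_pow_left₀ hat.le hts_le 2)).trans hmain⟩

end Finset

namespace Matrix

section DotProduct

variable {n 𝕜 : Type*} [Fintype n] [RCLike 𝕜]

theorem PosSemidef.norm_dotProduct_sq_le {M : Matrix n n 𝕜} (hM : M.PosSemidef) (x y : n → 𝕜) :
    ‖star x ⬝ᵥ (M *ᵥ y)‖ ^ 2 ≤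
      RCLike.re (star x ⬝ᵥ (M *ᵥ x)) * RCLike.re (star y ⬝ᵥ (M *ᵥ y)) := by
  let _ := M.toSeminormedAddCommGroup hM
  let _ := M.toInnerProductSpace hM
  have hinner : ∀ u v : n → 𝕜, inner 𝕜 u v = star u ⬝ᵥ (M *ᵥ v) := fun u v =>
    dotProduct_comm _ _
  have h := inner_mul_inner_self_le (𝕜 := 𝕜) x y
  rwa [norm_inner_symm y x, ← sq, hinner, hinner, hinner] at h

theorem star_mulVec_dotProduct (M : Matrix n n 𝕜) (x y : n → 𝕜) :
    star (M *ᵥ x) ⬝ᵥ y = star x ⬝ᵥ (Mᴴ *ᵥ y) := by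
  rw [star_mulVec, ← dotProduct_mulVec]

theorem PosDef.one_le_re_dotProduct_sq_mul_re_dotProduct_inv_sq [DecidableEq n]
    {A : Matrix n n 𝕜} (hA : A.PosDef) {v : n → 𝕜} (hv : star v ⬝ᵥ v = 1) :
    1 ≤ RCLike.re (star v ⬝ᵥ (A *ᵥ v)) ^ 2 * RCLike.re (star v ⬝ᵥ (A⁻¹ ^ 2 *ᵥ v)) := by
  have hAinv : A⁻¹ᴴ = A⁻¹ := hA.inv.isHermitian.eq
  set w := A⁻¹ *ᵥ v
  set a := RCLike.re (star v ⬝ᵥ (A *ᵥ v))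
  set r := RCLike.re (star v ⬝ᵥ w)
  set c := RCLike.re (star v ⬝ᵥ (A⁻¹ ^ 2 *ᵥ v))
  -- Cauchy–Schwarz for the form of `A`, with `⟪v, A w⟫ = 1` and `⟪w, A w⟫ = r`
  have h_one_le : 1 ≤ a * r := by
    have h := hA.posSemidef.norm_dotProduct_sq_le v w
    have hAw : A *ᵥ w = v := by
      rw [mulVec_mulVec, mul_nonsing_inv A (isUnit_iff_ne_zero.2 hA.det_pos.ne'), one_mulVec]
    rwa [hAw, hv, norm_one, one_pow, star_mulVec_dotProduct, hAinv] at h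
  -- Cauchy–Schwarz for the standard form, with `⟪w, w⟫ = c`
  have h_sq_le : r ^ 2 ≤ c := by
    have h := PosSemidef.one.norm_dotProduct_sq_le v w
    rw [one_mulVec, one_mulVec, hv, RCLike.one_re, one_mul, star_mulVec_dotProduct, hAinv,
      mulVec_mulVec, ← sq] at h
    exact (sq_le_sq' (neg_le_of_abs_le (RCLike.abs_re_le_norm _))
      (le_of_abs_le (RCLike.abs_re_le_norm _))).trans h
  have ha : 0 ≤ a := hA.posSemidef.re_dotProduct_nonneg v
  nlinarith [mul_nonneg ha ha]

end DotProduct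

section Projection

variable {m k R : Type*} [Fintype m] [DecidableEq m] [CommSemiring R]

theorem mul_eq_right_of_range_mulVecLin_le [Fintype k] [DecidableEq k] {M : Matrix m m R}
    {N : Matrix m k R} (hM : IsIdempotentElem M)
    (h : LinearMap.range N.mulVecLin ≤ LinearMap.range M.mulVecLin) : M * N = N := by
  have hM' : IsIdempotentElem M.mulVecLin := by
    rw [IsIdempotentElem, Module.End.mul_eq_comp, ← mulVecLin_mul, hM.eq]
  apply toLin'.injective
  rw [toLin'_mul]
  exact (LinearMap.IsIdempotentElem.comp_eq_right_iff hM' _).2 h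

theorem eq_of_isStarProjection_of_range_mulVecLin_eq [StarRing R] {P Q : Matrix m m R}
    (hP : IsStarProjection P) (hQ : IsStarProjection Q)
    (h : LinearMap.range P.mulVecLin = LinearMap.range Q.mulVecLin) : P = Q :=
  calc P = star (Q * P) := by rw [mul_eq_right_of_range_mulVecLin_le hQ.1 h.le, hP.2]
    _ = P * Q := by rw [star_mul, hP.2, hQ.2]
    _ = Q := mul_eq_right_of_range_mulVecLin_le hP.1 h.ge

end Projection

variable {n 𝕜 : Type*} [Fintype n] [DecidableEq n] [RCLike 𝕜]

theorem cfc_mul_cfc (f g : ℝ → ℝ) (B : Matrix n n 𝕜) :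
    cfc f B * cfc g B = cfc (fun x => f x * g x) B :=
  (cfc_mul f g B (B.finite_real_spectrum.continuousOn f)
    (B.finite_real_spectrum.continuousOn g)).symm

theorem isStarProjection_cfc_mul_inv (B : Matrix n n 𝕜) :
    IsStarProjection (cfc (fun x : ℝ => x * x⁻¹) B) := by
  refine ⟨?_, cfc_predicate _ B⟩
  rw [IsIdempotentElem, cfc_mul_cfc]
  congr! 2 with x
  by_cases hx : x = 0 <;> simp [hx]

theorem IsHermitian.range_mulVecLin_cfc_mul_inv {B : Matrix n n 𝕜} (hB : B.IsHermitian) :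
    LinearMap.range (cfc (fun x : ℝ => x * x⁻¹) B).mulVecLin = LinearMap.range B.mulVecLin := by
  have hQ : cfc (fun x : ℝ => x * x⁻¹) B = B * cfc (fun x : ℝ => x⁻¹) B := by
    rw [← cfc_mul_cfc, cfc_id' ℝ B hB.isSelfAdjoint]
  have hB' : cfc (fun x : ℝ => x * x⁻¹) B * B = B := by
    simpa only [mul_inv_mul_cancel, cfc_id' ℝ B hB.isSelfAdjoint] using
      cfc_mul_cfc (fun x : ℝ => x * x⁻¹) (fun x => x) B
  apply le_antisymm
  · rw [hQ, mulVecLin_mul]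
    exact LinearMap.range_comp_le_range _ _
  · conv_lhs => rw [← hB', mulVecLin_mul]
    exact LinearMap.range_comp_le_range _ _

theorem IsHermitian.re_trace_cfc_mul {B : Matrix n n 𝕜} (hB : B.IsHermitian) (f : ℝ → ℝ)
    (M : Matrix n n 𝕜) :
    RCLike.re (cfc f B * M).trace = ∑ i, f (hB.eigenvalues i) *
      RCLike.re (star ⇑(hB.eigenvectorBasis i) ⬝ᵥ (M *ᵥ ⇑(hB.eigenvectorBasis i))) := by
  rw [hB.cfc_eq, IsHermitian.cfc, Unitary.conjStarAlgAut_apply, mul_assoc, mul_assoc,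
    trace_mul_comm, mul_assoc]
  simp only [trace, diag, diagonal_mul, Matrix.mul_assoc, map_sum, Function.comp_apply,
    RCLike.re_ofReal_mul]
  rfl

theorem IsHermitian.star_eigenvectorBasis_dotProduct_self {B : Matrix n n 𝕜} (hB : B.IsHermitian)
    (i : n) :
    star ⇑(hB.eigenvectorBasis i) ⬝ᵥ ⇑(hB.eigenvectorBasis i) = 1 := by
  rw [dotProduct_comm, ← EuclideanSpace.inner_eq_star_dotProduct, inner_self_eq_norm_sq_to_K,
    hB.eigenvectorBasis.orthonormal.1 i]
  simp

end Matrix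

open Finset in
theorem trace_cube_inv_sq_ge_general {d : ℕ} (A B : Matrix (Fin d) (Fin d) ℂ)
    (hA : A.PosDef) (hB : B.PosSemidef) (htr : B.trace = 1)
    (P : Matrix (Fin d) (Fin d) ℂ) (hP : P.IsHermitian) (hP2 : P * P = P)
    (hrange : LinearMap.range P.mulVecLin = LinearMap.range B.mulVecLin) :
    (((P * A).trace.re) ^ 2)⁻¹ ≤ ((B ^ 3 * (A⁻¹) ^ 2).trace).re ∧
      ((A.trace.re) ^ 2)⁻¹ ≤ ((B ^ 3 * (A⁻¹) ^ 2).trace).re := by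
  have hBh : B.IsHermitian := hB.isHermitian
  -- `x * x⁻¹` is the indicator of `x ≠ 0`, since `0⁻¹ = 0`
  have hPB : P = cfc (fun x : ℝ => x * x⁻¹) B :=
    eq_of_isStarProjection_of_range_mulVecLin_eq ⟨hP2, hP⟩ (isStarProjection_cfc_mul_inv B)
      (hrange.trans hBh.range_mulVecLin_cfc_mul_inv.symm)
  have hPA := hBh.re_trace_cfc_mul (fun x => x * x⁻¹) A
  have hAA := hBh.re_trace_cfc_mul 1 A
  have hBA := hBh.re_trace_cfc_mul (· ^ 3) (A⁻¹ ^ 2)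
  rw [← hPB] at hPA
  rw [cfc_one ℝ B hBh.isSelfAdjoint, one_mul] at hAA
  rw [cfc_pow_id B 3 hBh.isSelfAdjoint] at hBA
  simp only [RCLike.re_to_complex, Pi.one_apply, one_mul] at hPA hAA hBA
  rw [hPA, hAA, hBA]
  have hsum : ∑ i, hBh.eigenvalues i = 1 := by
    have h := hBh.trace_eq_sum_eigenvalues
    rw [htr, ← RCLike.ofReal_sum, ← RCLike.ofReal_one, RCLike.ofReal_inj] at h
    exact h.symm
  have hunit := hBh.star_eigenvectorBasis_dotProduct_self
  refine inv_sq_sum_le_sum_cube_mul univ (fun i _ => hB.eigenvalues_nonneg i) hsum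
    (fun i _ => hA.re_dotProduct_pos fun h => ?_)
    (fun i _ => hA.one_le_re_dotProduct_sq_mul_re_dotProduct_inv_sq (hunit i))
  simpa [h] using hunit i

/-- For positive definite `A` and positive semidefinite `B` with `tr B = 1` commuting
with `A`, and `P` the orthogonal projection onto the support of `B` (a Hermitian
idempotent with the same range as `B`): `tr(B³A⁻²) ≥ (tr(PA))⁻²`, and in particular
`tr(B³A⁻²) ≥ (tr A)⁻²`. -/
theorem trace_cube_inv_sq_ge {d : ℕ} (A B : Matrix (Fin d) (Fin d) ℂ)
    (hA : A.PosDef) (hB : B.PosSemidef) (htr : B.trace = 1) (hcomm : Commute A B)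
    (P : Matrix (Fin d) (Fin d) ℂ) (hP : P.IsHermitian) (hP2 : P * P = P)
    (hrange : LinearMap.range P.mulVecLin = LinearMap.range B.mulVecLin) :
    (((P * A).trace.re) ^ 2)⁻¹ ≤ ((B ^ 3 * (A⁻¹) ^ 2).trace).re ∧
      ((A.trace.re) ^ 2)⁻¹ ≤ ((B ^ 3 * (A⁻¹) ^ 2).trace).re :=
  trace_cube_inv_sq_ge_general A B hA hB htr P hP hP2 hrange
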